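/- Let k ≥ 4 be an even integer and set F := e^{ikπ/4}·E*_{k,5}(i/√5). If k ≡ 0 (mod 8) then F is a positive real number; if k ≡ 4 (mod 8) then F is a negative real number; and if k ≡ 2 (mod 4) then E*_{k,5}(i/√5) = 0 (hence F = 0). -/

import Mathlib

open Complex

/-- The weight-`k` Eisenstein series for `SL₂(ℤ)`:
`E_k(z) = (1/2) ∑_{(c,d) coprime} (cz+d)^{-k}`. -/
noncomputable def Ek (k : ℕ) (z : ℂ) : ℂ :=
  (1 / 2) * ∑' q : {q : ℤ × ℤ // Int.gcd q.1 q.2 = 1},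
    (((q : ℤ × ℤ).1 : ℂ) * z + ((q : ℤ × ℤ).2 : ℂ)) ^ (-(k : ℤ))

/-- The Eisenstein series associated with the Fricke group `Γ₀*(p)`:
`E*_{k,p}(z) = (p^{k/2} E_k(pz) + E_k(z)) / (p^{k/2} + 1)`. -/
noncomputable def EkStar (k p : ℕ) (z : ℂ) : ℂ :=
  ((p : ℂ) ^ (k / 2) * Ek k ((p : ℂ) * z) + Ek k z) / ((p : ℂ) ^ (k / 2) + 1)

/-!
Write `k = 2m`. Since `i/√5 = -1/(i√5)`, the transformation law `E_k(-1/z) = z^k E_k(z)` (a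
reindexing `(c, d) ↦ (-d, c)` of the coprime pairs) gives
`E*_{k,5}(i/√5) = (5^m + (-5)^m)/(5^m + 1) · E_k(i√5)`, which vanishes for odd `m`.
The reindexing `(c, d) ↦ (-c, d)` shows that `E_k(it)` is real for real `t`. Its value is positive
for `t² ≥ 9/2`: the pairs `(0, ±1)` contribute `1`, and the remaining terms have total absolute
value `< 1`, because `|ict + d|⁴ ≥ 9c²(d² + 1)` for `c ≠ 0` and
`∑ 1/c² · ∑ 1/(d² + 1) ≤ (π²/3)(1 + π²/3) < 18`.
Finally `e^{ikπ/4} = (-1)^{k/4}` when `4 ∣ k`.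
-/

open Real ComplexConjugate

abbrev CoprimePair := {q : ℤ × ℤ // Int.gcd q.1 q.2 = 1}

namespace CoprimePair

def rotate : CoprimePair ≃ CoprimePair :=
  ((Equiv.prodComm ℤ ℤ).trans ((Equiv.neg ℤ).prodCongr (Equiv.refl ℤ))).subtypeEquiv
    fun q => by simp [Int.gcd_comm]

def negFst : CoprimePair ≃ CoprimePair :=
  ((Equiv.neg ℤ).prodCongr (Equiv.refl ℤ)).subtypeEquiv fun q => by simp

def zeroFst : Finset CoprimePair := {⟨(0, 1), rfl⟩, ⟨(0, -1), rfl⟩}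

theorem fst_ne_zero_of_notMem_zeroFst {q : CoprimePair} (hq : q ∉ zeroFst) : q.1.1 ≠ 0 := by
  obtain ⟨⟨c, d⟩, hcd⟩ := q
  rintro rfl
  have hd : d.natAbs = 1 := by simpa using hcd
  rcases Int.natAbs_eq_iff.mp hd with rfl | rfl <;> simp [zeroFst] at hq

theorem sum_zeroFst_zpow {k : ℕ} (hk : Even k) (z : ℂ) :
    ∑ q ∈ zeroFst, ((q.1.1 : ℂ) * z + q.1.2) ^ (-(k : ℤ)) = 2 := by
  rw [zeroFst, Finset.sum_pair (by decide)]
  norm_num [hk.neg_one_pow]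

end CoprimePair

theorem Ek_neg_inv (k : ℕ) {z : ℂ} (hz : z ≠ 0) : Ek k (-z⁻¹) = z ^ k * Ek k z := by
  rw [Ek, Ek, ← CoprimePair.rotate.tsum_eq, mul_left_comm, ← tsum_mul_left (a := z ^ k)]
  refine congrArg _ (tsum_congr fun q => ?_)
  have hsummand : ((CoprimePair.rotate q).1.1 : ℂ) * -z⁻¹ + (CoprimePair.rotate q).1.2
      = z⁻¹ * (q.1.1 * z + q.1.2) := by
    change ((-q.1.2 : ℤ) : ℂ) * -z⁻¹ + q.1.1 = _
    push_cast
    field_simp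
    ring
  rw [hsummand, mul_zpow, inv_zpow', neg_neg, zpow_natCast]

theorem conj_Ek (k : ℕ) (z : ℂ) : conj (Ek k z) = Ek k (-conj z) := by
  rw [Ek, Ek, map_mul, Complex.conj_tsum, ← CoprimePair.negFst.tsum_eq]
  congr 1
  · simp [map_ofNat]
  · refine tsum_congr fun q => ?_
    simp [CoprimePair.negFst]

theorem Ek_I_mul_ofReal_im (k : ℕ) (t : ℝ) : (Ek k (I * t)).im = 0 := by
  rw [← conj_eq_iff_im, conj_Ek]
  simp

theorem EkStar_five_I_div_sqrt_five (m : ℕ) :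
    EkStar (2 * m) 5 (I / √5) = (5 ^ m + (-5) ^ m) / (5 ^ m + 1) * Ek (2 * m) (I * √5) := by
  have hsq : ((√5 : ℝ) : ℂ) ^ 2 = 5 := by norm_cast; simp
  have hne : ((√5 : ℝ) : ℂ) ≠ 0 := by norm_cast; positivity
  have hmul : (5 : ℂ) * (I / √5) = I * √5 := by
    field_simp; rw [hsq]
  have hinv : I / √5 = -(I * √5)⁻¹ := by
    field_simp; simp
  have hpow : (I * √5) ^ (2 * m) = (-5 : ℂ) ^ m := by
    rw [pow_mul, mul_pow, I_sq, hsq]; ring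
  rw [EkStar, Nat.mul_div_cancel_left m two_pos, Nat.cast_ofNat, hmul, hinv,
    Ek_neg_inv _ (mul_ne_zero I_ne_zero hne), hpow]
  ring

theorem tsum_pnat_inv_sq : ∑' n : ℕ+, ((n : ℝ) ^ 2)⁻¹ = π ^ 2 / 6 := by
  have hzeta : ∑' n : ℕ, ((n : ℝ) ^ 2)⁻¹ = π ^ 2 / 6 := by
    simpa only [one_div] using hasSum_zeta_two.tsum_eq
  simpa [hzeta] using tsum_zero_pnat_eq_tsum_nat (Real.summable_nat_pow_inv.mpr one_lt_two)

theorem summable_pnat_inv_sq : Summable fun n : ℕ+ => ((n : ℝ) ^ 2)⁻¹ :=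
  (Real.summable_nat_pow_inv.mpr one_lt_two).comp_injective PNat.coe_injective

theorem summable_int_inv_sq : Summable fun n : ℤ => ((n : ℝ) ^ 2)⁻¹ := by
  simpa using Real.summable_one_div_int_pow.mpr one_lt_two

theorem summable_int_inv_sq_add_one : Summable fun n : ℤ => ((n : ℝ) ^ 2 + 1)⁻¹ := by
  refine summable_int_inv_sq.of_norm_bounded_eventually ?_
  filter_upwards [Filter.eventually_cofinite_ne 0] with n hn
  have : (n : ℝ) ≠ 0 := by exact_mod_cast hn
  rw [norm_inv, Real.norm_of_nonneg (by positivity)]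
  exact inv_anti₀ (by positivity) (by linarith)

theorem tsum_int_inv_sq : ∑' n : ℤ, ((n : ℝ) ^ 2)⁻¹ = π ^ 2 / 3 := by
  rw [tsum_int_eq_zero_add_two_mul_tsum_pnat (fun n => by simp) summable_int_inv_sq]
  simp only [Int.cast_natCast, Int.cast_zero, tsum_pnat_inv_sq]
  norm_num
  ring

theorem tsum_int_inv_sq_add_one_le : ∑' n : ℤ, ((n : ℝ) ^ 2 + 1)⁻¹ ≤ 1 + π ^ 2 / 3 := by
  rw [tsum_int_eq_zero_add_two_mul_tsum_pnat (fun n => by simp) summable_int_inv_sq_add_one]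
  have hle : ∑' n : ℕ+, ((n : ℝ) ^ 2 + 1)⁻¹ ≤ π ^ 2 / 6 := by
    have hterm : ∀ n : ℕ+, ((n : ℝ) ^ 2 + 1)⁻¹ ≤ ((n : ℝ) ^ 2)⁻¹ := fun n =>
      inv_anti₀ (by positivity) (by linarith)
    rw [← tsum_pnat_inv_sq]
    exact (summable_pnat_inv_sq.of_nonneg_of_le (fun n => by positivity) hterm).tsum_le_tsum hterm
      summable_pnat_inv_sq
  simp only [Int.cast_natCast, Int.cast_zero]
  norm_num
  linarith

theorem summable_inv_sq_mul_inv_sq_add_one :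
    Summable fun p : ℤ × ℤ => ((p.1 : ℝ) ^ 2)⁻¹ * ((p.2 : ℝ) ^ 2 + 1)⁻¹ :=
  summable_int_inv_sq.mul_of_nonneg summable_int_inv_sq_add_one (fun _ => by positivity)
    (fun _ => by positivity)

theorem tsum_inv_sq_mul_inv_sq_add_one_lt :
    ∑' p : ℤ × ℤ, ((p.1 : ℝ) ^ 2)⁻¹ * ((p.2 : ℝ) ^ 2 + 1)⁻¹ < 18 := by
  rw [← summable_int_inv_sq.tsum_mul_tsum summable_int_inv_sq_add_one
    summable_inv_sq_mul_inv_sq_add_one, tsum_int_inv_sq]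
  have hpi2 : π ^ 2 < 9.93 := by nlinarith [Real.pi_lt_d2, Real.pi_pos]
  calc π ^ 2 / 3 * ∑' n : ℤ, ((n : ℝ) ^ 2 + 1)⁻¹ ≤ π ^ 2 / 3 * (1 + π ^ 2 / 3) := by
        gcongr; exact tsum_int_inv_sq_add_one_le
    _ < 18 := by nlinarith [sq_nonneg π]

theorem norm_ofInt_mul_I_mul_add_sq (t : ℝ) (c d : ℤ) :
    ‖(c : ℂ) * (I * t) + d‖ ^ 2 = t ^ 2 * c ^ 2 + d ^ 2 := by
  rw [Complex.sq_norm, Complex.normSq_apply]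
  simp only [add_re, mul_re, intCast_re, I_re, ofReal_re, zero_mul, I_im, ofReal_im, mul_zero,
    sub_self, intCast_im, mul_im, one_mul, zero_add, add_im, add_zero]
  ring

theorem norm_zpow_ofInt_mul_I_mul_add_le {k : ℕ} (hk : 4 ≤ k) {t : ℝ} (ht : 9 / 2 ≤ t ^ 2)
    {c : ℤ} (hc : c ≠ 0) (d : ℤ) :
    ‖((c : ℂ) * (I * t) + d) ^ (-(k : ℤ))‖ ≤ ((c : ℝ) ^ 2)⁻¹ * ((d : ℝ) ^ 2 + 1)⁻¹ / 9 := by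
  set A := ‖(c : ℂ) * (I * t) + d‖
  have hA2 : A ^ 2 = t ^ 2 * c ^ 2 + d ^ 2 := norm_ofInt_mul_I_mul_add_sq t c d
  have hc2 : 1 ≤ (c : ℝ) ^ 2 := by
    have : 1 ≤ c ^ 2 := by rcases lt_or_gt_of_ne hc with h | h <;> nlinarith
    exact_mod_cast this
  have hA1 : 1 ≤ A := by nlinarith [sq_nonneg (d : ℝ), norm_nonneg ((c : ℂ) * (I * t) + d)]
  have hA4 : 9 * (c : ℝ) ^ 2 * ((d : ℝ) ^ 2 + 1) ≤ A ^ 4 := by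
    have htc : 9 / 2 * (c : ℝ) ^ 2 ≤ t ^ 2 * c ^ 2 := by gcongr
    rw [show A ^ 4 = (A ^ 2) ^ 2 by ring, hA2]
    nlinarith [mul_le_mul htc htc (by positivity) (by positivity),
      mul_le_mul_of_nonneg_right htc (sq_nonneg (d : ℝ)), sq_nonneg (d : ℝ)]
  rw [norm_zpow, zpow_neg, zpow_natCast, ← mul_inv, div_eq_mul_inv, ← mul_inv]
  exact inv_anti₀ (by positivity) (by
    calc _ = 9 * (c : ℝ) ^ 2 * ((d : ℝ) ^ 2 + 1) := by ring
      _ ≤ A ^ 4 := hA4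
      _ ≤ A ^ k := pow_le_pow_right₀ hA1 hk)

theorem Ek_I_mul_re_pos {k : ℕ} (hk : 4 ≤ k) (hke : Even k) {t : ℝ} (ht : 9 / 2 ≤ t ^ 2) :
    0 < (Ek k (I * t)).re := by
  set f : CoprimePair → ℂ := fun q => ((q.1.1 : ℂ) * (I * t) + q.1.2) ^ (-(k : ℤ))
  set s := CoprimePair.zeroFst
  set S : Set CoprimePair := (s : Set CoprimePair)ᶜ
  set G : ℤ × ℤ → ℝ := fun p => ((p.1 : ℝ) ^ 2)⁻¹ * ((p.2 : ℝ) ^ 2 + 1)⁻¹ / 9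
  have hG : Summable G := summable_inv_sq_mul_inv_sq_add_one.div_const 9
  have hinj : Function.Injective fun q : S => q.1.1 :=
    Subtype.val_injective.comp Subtype.val_injective
  have hbound (q : S) : ‖f q‖ ≤ G q.1.1 :=
    norm_zpow_ofInt_mul_I_mul_add_le hk ht (CoprimePair.fst_ne_zero_of_notMem_zeroFst q.2) _
  have hf : Summable f :=
    (Finset.summable_compl_iff s).mp ((hG.comp_injective hinj).of_norm_bounded hbound)
  have htail : ‖∑' q : S, f q‖ < 2 :=
    calc _ ≤ ∑' q : S, G q.1.1 :=
          tsum_of_norm_bounded (hG.comp_injective hinj).hasSum hbound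
      _ ≤ ∑' p, G p := tsum_comp_le_tsum_of_inj hG (fun _ => by positivity) hinj
      _ < 2 := by
        rw [tsum_div_const]; linarith [tsum_inv_sq_mul_inv_sq_add_one_lt]
  have hEk : Ek k (I * t) = 1 + (∑' q : S, f q) / 2 := by
    rw [Ek, ← hf.sum_add_tsum_compl, CoprimePair.sum_zeroFst_zpow hke]
    ring
  rw [hEk, add_re, one_re, div_ofNat_re]
  linarith [(abs_lt.mp ((abs_re_le_norm _).trans_lt htail)).1]

theorem exp_I_mul_four_mul_pi_div_four (n : ℕ) :
    exp (I * ((4 * n : ℕ) : ℂ) * π / 4) = (-1) ^ n := by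
  rw [← exp_pi_mul_I, ← Complex.exp_nat_mul]
  push_cast
  ring_nf

theorem exp_mul_EkStar_five_I_div_sqrt_five (n : ℕ) :
    exp (I * ((4 * n : ℕ) : ℂ) * π / 4) * EkStar (4 * n) 5 (I / √5) =
      (((-1) ^ n * (2 * 5 ^ (2 * n) / (5 ^ (2 * n) + 1) * (Ek (4 * n) (I * √5)).re) : ℝ) : ℂ) := by
  have hreal : Ek (2 * (2 * n)) (I * √5) = ((Ek (2 * (2 * n)) (I * √5)).re : ℂ) :=
    (conj_eq_iff_re.mp (conj_eq_iff_im.mpr (Ek_I_mul_ofReal_im _ _))).symm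
  rw [exp_I_mul_four_mul_pi_div_four, show 4 * n = 2 * (2 * n) by ring,
    EkStar_five_I_div_sqrt_five, (even_two_mul n).neg_pow]
  conv_lhs => rw [hreal]
  push_cast
  ring

theorem stmt6 (k : ℕ) (hk : 4 ≤ k) (hke : Even k) :
    (k % 8 = 0 →
      (Complex.exp (I * k * Real.pi / 4) * EkStar k 5 (I / Real.sqrt 5)).im = 0 ∧
      0 < (Complex.exp (I * k * Real.pi / 4) * EkStar k 5 (I / Real.sqrt 5)).re) ∧
    (k % 8 = 4 →
      (Complex.exp (I * k * Real.pi / 4) * EkStar k 5 (I / Real.sqrt 5)).im = 0 ∧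
      (Complex.exp (I * k * Real.pi / 4) * EkStar k 5 (I / Real.sqrt 5)).re < 0) ∧
    (k % 4 = 2 → EkStar k 5 (I / Real.sqrt 5) = 0) := by
  have hpos (n : ℕ) (hn : k = 4 * n) :
      0 < 2 * 5 ^ (2 * n) / (5 ^ (2 * n) + 1) * (Ek (4 * n) (I * √5)).re := by
    have := Ek_I_mul_re_pos hk hke (t := √5) (by norm_num)
    rw [hn] at this
    positivity
  refine ⟨fun h8 => ?_, fun h8 => ?_, fun h4 => ?_⟩
  · obtain ⟨n, rfl⟩ : ∃ n, k = 4 * n := ⟨k / 4, by omega⟩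
    rw [exp_mul_EkStar_five_I_div_sqrt_five, (Nat.even_iff.mpr (by omega)).neg_one_pow, one_mul]
    exact ⟨ofReal_im _, hpos n rfl⟩
  · obtain ⟨n, rfl⟩ : ∃ n, k = 4 * n := ⟨k / 4, by omega⟩
    rw [exp_mul_EkStar_five_I_div_sqrt_five, (Nat.odd_iff.mpr (by omega)).neg_one_pow]
    exact ⟨ofReal_im _, by rw [ofReal_re]; linarith [hpos n rfl]⟩
  · obtain ⟨m, rfl⟩ : ∃ m, k = 2 * m := ⟨k / 2, by omega⟩
    rw [EkStar_five_I_div_sqrt_five, (Nat.odd_iff.mpr (by omega)).neg_pow]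
    simp
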